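/- If a flag simplicial complex K has no 4-belt, then for every edge {u, v} of K, the intersection of the links lk(u) ∩ lk(v) equals the link of the edge {u, v}, and this link is again flag with no 4-belt. -/
import Mathlib


def IsSimplicialComplex {V : Type*} (K : Set (Finset V)) : Prop :=
  ∀ σ ∈ K, ∀ τ ⊆ σ, τ ∈ K

def IsFlag {V : Type*} [DecidableEq V] (K : Set (Finset V)) : Prop :=
  ∀ s : Finset V, (∀ u ∈ s, ∀ w ∈ s, ({u, w} : Finset V) ∈ K) → s ∈ K

/-- The link of a face `s`: `lk(s) = {τ : τ ∩ s = ∅, τ ∪ s ∈ K}`. -/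
def lk {V : Type*} [DecidableEq V] (K : Set (Finset V)) (s : Finset V) :
    Set (Finset V) :=
  {τ : Finset V | Disjoint τ s ∧ τ ∪ s ∈ K}

/-- `K` has no 4-belt (chordless 4-cycle). -/
def No4Belt {V : Type*} [DecidableEq V] (K : Set (Finset V)) : Prop :=
  ¬ ∃ a b c d : V, a ≠ b ∧ a ≠ c ∧ a ≠ d ∧ b ≠ c ∧ b ≠ d ∧ c ≠ d ∧
    ({a, b} : Finset V) ∈ K ∧ ({b, c} : Finset V) ∈ K ∧
    ({c, d} : Finset V) ∈ K ∧ ({d, a} : Finset V) ∈ K ∧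
    ({a, c} : Finset V) ∉ K ∧ ({b, d} : Finset V) ∉ K

/-- in a flag complex `K` with no 4-belt, for every edge `{u,v}`
one has `lk(u) ∩ lk(v) = lk({u,v})`, and this link is again flag with no 4-belt. -/
theorem stmt10 {V : Type*} [DecidableEq V] (K : Set (Finset V))
    (hK : IsSimplicialComplex K) (hflag : IsFlag K) (hbelt : No4Belt K)
    (u v : V) (huv : u ≠ v) (he : ({u, v} : Finset V) ∈ K) :
    lk K {u} ∩ lk K {v} = lk K {u, v} ∧
      IsFlag (lk K ({u, v} : Finset V)) ∧ No4Belt (lk K ({u, v} : Finset V)) := by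
  -- any pair of vertices of a face is a face
  have hedge : ∀ σ ∈ K, ∀ a ∈ σ, ∀ b ∈ σ, ({a, b} : Finset V) ∈ K := by
    intro σ hσ a ha b hb
    refine hK σ hσ _ ?_
    intro x hx
    rcases Finset.mem_insert.mp hx with h | h
    · exact h ▸ ha
    · exact (Finset.mem_singleton.mp h) ▸ hb
  refine ⟨?_, ?_, ?_⟩
  · -- lk(u) ∩ lk(v) = lk({u,v})
    ext τ
    simp only [Set.mem_inter_iff, lk, Set.mem_setOf_eq]
    constructor
    · rintro ⟨⟨hd1, h1⟩, hd2, h2⟩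
      refine ⟨?_, ?_⟩
      · rw [Finset.disjoint_left] at hd1 hd2 ⊢
        intro a ha hauv
        rcases Finset.mem_insert.mp hauv with h | h
        · exact hd1 ha (by simp [h])
        · exact hd2 ha (by simp [Finset.mem_singleton.mp h])
      · apply hflag
        intro a ha b hb
        have ha' : a ∈ τ ∨ a = u ∨ a = v := by
          simp only [Finset.mem_union, Finset.mem_insert, Finset.mem_singleton] at ha
          tauto
        have hb' : b ∈ τ ∨ b = u ∨ b = v := by
          simp only [Finset.mem_union, Finset.mem_insert, Finset.mem_singleton] at hb
          tauto
        rcases ha' with ha' | ha' | ha' <;> rcases hb' with hb' | hb' | hb'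
        · exact hedge _ h1 a (by simp [ha']) b (by simp [hb'])
        · exact hedge _ h1 a (by simp [ha']) b (by simp [hb'])
        · exact hedge _ h2 a (by simp [ha']) b (by simp [hb'])
        · exact hedge _ h1 a (by simp [ha']) b (by simp [hb'])
        · exact hedge _ h1 a (by simp [ha']) b (by simp [hb'])
        · subst ha'; subst hb'; exact he
        · exact hedge _ h2 a (by simp [ha']) b (by simp [hb'])
        · subst ha'; subst hb'; rwa [Finset.pair_comm]
        · exact hedge _ h2 a (by simp [ha']) b (by simp [hb'])
    · rintro ⟨hd, h⟩
      rw [Finset.disjoint_left] at hd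
      refine ⟨⟨?_, ?_⟩, ?_, ?_⟩
      · rw [Finset.disjoint_left]
        intro a ha h'; exact hd ha (by simp [Finset.mem_singleton.mp h'])
      · refine hK _ h _ ?_
        intro x hx
        rcases Finset.mem_union.mp hx with h' | h'
        · exact Finset.mem_union.mpr (Or.inl h')
        · exact Finset.mem_union.mpr (Or.inr (by simp [Finset.mem_singleton.mp h']))
      · rw [Finset.disjoint_left]
        intro a ha h'; exact hd ha (by simp [Finset.mem_singleton.mp h'])
      · refine hK _ h _ ?_
        intro x hx
        rcases Finset.mem_union.mp hx with h' | h'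
        · exact Finset.mem_union.mpr (Or.inl h')
        · exact Finset.mem_union.mpr (Or.inr (by simp [Finset.mem_singleton.mp h']))
  · -- flagness of lk({u,v})
    intro s hs
    have hsing : ∀ a ∈ s, ({a} : Finset V) ∪ {u, v} ∈ K := by
      intro a ha
      have h := (hs a ha a ha).2
      have : ({a, a} : Finset V) = {a} := by simp
      rwa [this] at h
    have hdisj : Disjoint s ({u, v} : Finset V) := by
      rw [Finset.disjoint_left]
      intro a ha
      have h := (hs a ha a ha).1
      rw [Finset.disjoint_left] at h
      exact h (by simp)
    refine ⟨hdisj, ?_⟩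
    apply hflag
    intro a ha b hb
    have ha' : a ∈ s ∨ a = u ∨ a = v := by
      simp only [Finset.mem_union, Finset.mem_insert, Finset.mem_singleton] at ha
      tauto
    have hb' : b ∈ s ∨ b = u ∨ b = v := by
      simp only [Finset.mem_union, Finset.mem_insert, Finset.mem_singleton] at hb
      tauto
    rcases ha' with ha' | ha' | ha' <;> rcases hb' with hb' | hb' | hb'
    · exact hedge _ (hs a ha' b hb').2 a (by simp) b (by simp)
    · exact hedge _ (hsing a ha') a (by simp) b (by simp [hb'])
    · exact hedge _ (hsing a ha') a (by simp) b (by simp [hb'])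
    · exact hedge _ (hsing b hb') a (by simp [ha']) b (by simp)
    · exact hedge _ he a (by simp [ha']) b (by simp [hb'])
    · exact hedge _ he a (by simp [ha']) b (by simp [hb'])
    · exact hedge _ (hsing b hb') a (by simp [ha']) b (by simp)
    · exact hedge _ he a (by simp [ha']) b (by simp [hb'])
    · exact hedge _ he a (by simp [ha']) b (by simp [hb'])
  · -- no 4-belt in lk({u,v})
    rintro ⟨a, b, c, d, hab, hac, had, hbc, hbd, hcd, e1, e2, e3, e4, n1, n2⟩
    obtain ⟨d1, m1⟩ := e1
    obtain ⟨d2, m2⟩ := e2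
    obtain ⟨d3, m3⟩ := e3
    obtain ⟨d4, m4⟩ := e4
    -- singletons joined with {u,v}
    have hsa : ({a} : Finset V) ∪ {u, v} ∈ K := by
      refine hK _ m1 _ ?_
      intro x hx; simp at hx ⊢; tauto
    have hsb : ({b} : Finset V) ∪ {u, v} ∈ K := by
      refine hK _ m1 _ ?_
      intro x hx; simp at hx ⊢; tauto
    have hsc : ({c} : Finset V) ∪ {u, v} ∈ K := by
      refine hK _ m3 _ ?_
      intro x hx; simp at hx ⊢; tauto
    have hsd : ({d} : Finset V) ∪ {u, v} ∈ K := by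
      refine hK _ m3 _ ?_
      intro x hx; simp at hx ⊢; tauto
    -- key: if x, y have x∪{u,v}, y∪{u,v} ∈ K, x,y ∉ {u,v}, and {x,y} ∈ K
    -- then {x,y} is in the link of {u,v}
    have key : ∀ x y : V, ({x} : Finset V) ∪ {u, v} ∈ K →
        ({y} : Finset V) ∪ {u, v} ∈ K →
        Disjoint ({x} : Finset V) ({u, v} : Finset V) →
        Disjoint ({y} : Finset V) ({u, v} : Finset V) →
        ({x, y} : Finset V) ∈ K → ({x, y} : Finset V) ∈ lk K {u, v} := by
      intro x y hx hy dx dy hxy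
      rw [Finset.disjoint_left] at dx dy
      refine ⟨?_, ?_⟩
      · rw [Finset.disjoint_left]
        intro z hz
        rcases Finset.mem_insert.mp hz with h | h
        · exact dx (by simp [h])
        · exact dy (by simp [Finset.mem_singleton.mp h])
      · apply hflag
        intro p hp q hq
        have hp' : p = x ∨ p = y ∨ p = u ∨ p = v := by
          simp only [Finset.mem_union, Finset.mem_insert, Finset.mem_singleton] at hp
          tauto
        have hq' : q = x ∨ q = y ∨ q = u ∨ q = v := by
          simp only [Finset.mem_union, Finset.mem_insert, Finset.mem_singleton] at hq
          tauto
        have hyx : ({y, x} : Finset V) ∈ K := by rw [Finset.pair_comm]; exact hxy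
        have hxu : ({x, u} : Finset V) ∈ K := hedge _ hx x (by simp) u (by simp)
        have hux : ({u, x} : Finset V) ∈ K := hedge _ hx u (by simp) x (by simp)
        have hxv : ({x, v} : Finset V) ∈ K := hedge _ hx x (by simp) v (by simp)
        have hvx : ({v, x} : Finset V) ∈ K := hedge _ hx v (by simp) x (by simp)
        have hyu : ({y, u} : Finset V) ∈ K := hedge _ hy y (by simp) u (by simp)
        have huy : ({u, y} : Finset V) ∈ K := hedge _ hy u (by simp) y (by simp)
        have hyv : ({y, v} : Finset V) ∈ K := hedge _ hy y (by simp) v (by simp)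
        have hvy : ({v, y} : Finset V) ∈ K := hedge _ hy v (by simp) y (by simp)
        have hvu : ({v, u} : Finset V) ∈ K := hedge _ he v (by simp) u (by simp)
        have hxx : ({x, x} : Finset V) ∈ K := hedge _ hx x (by simp) x (by simp)
        have hyy : ({y, y} : Finset V) ∈ K := hedge _ hy y (by simp) y (by simp)
        have huu : ({u, u} : Finset V) ∈ K := hedge _ he u (by simp) u (by simp)
        have hvv : ({v, v} : Finset V) ∈ K := hedge _ he v (by simp) v (by simp)
        rcases hp' with h | h | h | h <;> rcases hq' with h' | h' | h' | h' <;>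
          rw [h, h'] <;> assumption
    have da : Disjoint ({a} : Finset V) ({u, v} : Finset V) :=
      Finset.disjoint_of_subset_left (by simp [Finset.insert_subset_iff]) d1
    have db : Disjoint ({b} : Finset V) ({u, v} : Finset V) :=
      Finset.disjoint_of_subset_left (by simp [Finset.insert_subset_iff]) d1
    have dc : Disjoint ({c} : Finset V) ({u, v} : Finset V) :=
      Finset.disjoint_of_subset_left (by simp [Finset.insert_subset_iff]) d3
    have dd : Disjoint ({d} : Finset V) ({u, v} : Finset V) :=
      Finset.disjoint_of_subset_left (by simp [Finset.insert_subset_iff]) d3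
    apply hbelt
    refine ⟨a, b, c, d, hab, hac, had, hbc, hbd, hcd,
      hedge _ m1 a (by simp) b (by simp),
      hedge _ m2 b (by simp) c (by simp),
      hedge _ m3 c (by simp) d (by simp),
      hedge _ m4 d (by simp) a (by simp), ?_, ?_⟩
    · intro h; exact n1 (key a c hsa hsc da dc h)
    · intro h; exact n2 (key b d hsb hsd db dd h)
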